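/- Suppose G is a graph and M = M[IAS(G)] satisfies κ(M) < n. Then there is a subset X ⊆ V such that τ_G(X) is a vertical κ(M)-separation of M and κ(M) = 2·c_G(X) + 1. -/

import Mathlib

open scoped ENat

variable {V : Type*} [Fintype V] [DecidableEq V]

/-- The column of the matrix `IAS(G) = (I | A | A+I)` indexed by `(v, i)`:
`i = 0` gives `φ(v)` (identity column), `i = 1` gives `χ(v)` (column of `A`),
`i = 2` gives `ψ(v)` (column of `A + I`). -/
def iasCol (A : Matrix V V (ZMod 2)) : V × Fin 3 → V → ZMod 2 :=
  fun p w =>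
    if p.2 = 0 then (if w = p.1 then 1 else 0)
    else if p.2 = 1 then A w p.1
    else A w p.1 + (if w = p.1 then 1 else 0)

/-- The rank of a subset of the ground set `W(G) = V × Fin 3` of the isotropic
matroid: the GF(2)-rank of the corresponding set of columns. -/
noncomputable def iasRank (A : Matrix V V (ZMod 2)) (S : Set (V × Fin 3)) : ℕ :=
  Module.finrank (ZMod 2) (Submodule.span (ZMod 2) (iasCol A '' S))

/-- The connectivity function `λ(S) = r(S) + r(W - S) - r(M)`. -/
noncomputable def iasLambda (A : Matrix V V (ZMod 2)) (S : Set (V × Fin 3)) : ℕ :=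
  iasRank A S + iasRank A Sᶜ - iasRank A Set.univ

/-- Independence in the isotropic matroid. -/
def iasIndep (A : Matrix V V (ZMod 2)) (S : Set (V × Fin 3)) : Prop :=
  LinearIndependent (ZMod 2) (fun s : S => iasCol A s.1)

/-- Circuits of the isotropic matroid: minimal dependent sets. -/
def iasCircuit (A : Matrix V V (ZMod 2)) (C : Set (V × Fin 3)) : Prop :=
  ¬ iasIndep A C ∧ ∀ S ⊂ C, iasIndep A S

/-- An ordinary `k`-separation: `λ(S) < k` and `|S|, |W - S| ≥ k`. -/
def OrdinarySep (A : Matrix V V (ZMod 2)) (k : ℕ) (S : Set (V × Fin 3)) : Prop :=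
  0 < k ∧ iasLambda A S < k ∧ k ≤ S.ncard ∧ k ≤ Sᶜ.ncard

/-- A cyclic `k`-separation: `λ(S) < k` and both `S` and `W - S` are dependent. -/
def CyclicSep (A : Matrix V V (ZMod 2)) (k : ℕ) (S : Set (V × Fin 3)) : Prop :=
  0 < k ∧ iasLambda A S < k ∧ ¬ iasIndep A S ∧ ¬ iasIndep A Sᶜ

/-- A vertical `k`-separation: `λ(S) < k` and `r(S), r(W - S) ≥ k`. -/
def VerticalSep (A : Matrix V V (ZMod 2)) (k : ℕ) (S : Set (V × Fin 3)) : Prop :=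
  0 < k ∧ iasLambda A S < k ∧ k ≤ iasRank A S ∧ k ≤ iasRank A Sᶜ

/-- `τ(M) = min {k : M has an ordinary k-separation}`, with `min ∅ = ∞`. -/
noncomputable def iasTau (A : Matrix V V (ZMod 2)) : ℕ∞ :=
  sInf {k : ℕ∞ | ∃ m : ℕ, (m : ℕ∞) = k ∧ ∃ S, OrdinarySep A m S}

/-- `κ*(M) = min ({k : M has a cyclic k-separation} ∪ {|W| - r(M)})`. -/
noncomputable def iasKappaStar (A : Matrix V V (ZMod 2)) : ℕ :=
  sInf ({k : ℕ | ∃ S, CyclicSep A k S} ∪ {3 * Fintype.card V - iasRank A Set.univ})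

/-- `κ(M) = min ({k : M has a vertical k-separation} ∪ {r(M)})`. -/
noncomputable def iasKappa (A : Matrix V V (ZMod 2)) : ℕ :=
  sInf ({k : ℕ | ∃ S, VerticalSep A k S} ∪ {iasRank A Set.univ})

/-- The simple graph underlying a looped simple graph given by its adjacency matrix. -/
def toSimpleGraph (A : Matrix V V (ZMod 2)) : SimpleGraph V where
  Adj v w := v ≠ w ∧ A v w = 1 ∧ A w v = 1
  symm := ⟨fun v w ⟨h1, h2, h3⟩ => ⟨Ne.symm h1, h3, h2⟩⟩
  loopless := ⟨fun v h => h.1 rfl⟩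

/-- The open neighborhood `N_G(v)`. -/
def nbhd (A : Matrix V V (ZMod 2)) (v : V) : Set V := {u | u ≠ v ∧ A v u = 1}

/-- `v` is a pendant vertex: `N_G(v) = {w}` for some `w`. -/
def IsPendant (A : Matrix V V (ZMod 2)) (v : V) : Prop := ∃ w, nbhd A v = {w}

/-- `G` has a pair of twin vertices: `v ≠ w` with `N_G(v) - {w} = N_G(w) - {v}`. -/
def HasTwins (A : Matrix V V (ZMod 2)) : Prop :=
  ∃ v w, v ≠ w ∧ nbhd A v \ {w} = nbhd A w \ {v}

/-- The cut-rank `c_G(X)`: the GF(2)-rank of the submatrix `A[V - X, X]`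
(columns indexed by `X`, rows indexed by `V - X`). -/
noncomputable def cutRank (A : Matrix V V (ZMod 2)) (X : Set V) : ℕ :=
  Module.finrank (ZMod 2)
    (Submodule.span (ZMod 2) ((fun x : V => fun w : ↥(Xᶜ) => A w.1 x) '' X))

/-- `τ_G(X) = ⋃_{x ∈ X} τ_G(x)`, the union of the vertex triples of members of `X`. -/
def tauSet (X : Set V) : Set (V × Fin 3) := {p | p.1 ∈ X}

/-- Loop complementation at `v`. -/
def loopComp (A : Matrix V V (ZMod 2)) (v : V) : Matrix V V (ZMod 2) :=
  fun x y => A x y + if x = v ∧ y = v then 1 else 0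

/-- Simple local complementation at `v`. -/
def simpleLocalComp (A : Matrix V V (ZMod 2)) (v : V) : Matrix V V (ZMod 2) :=
  fun x y => A x y +
    if x ≠ y ∧ (x ≠ v ∧ A v x = 1) ∧ (y ≠ v ∧ A v y = 1) then 1 else 0

/-- Non-simple local complementation at `v`. -/
def nonSimpleLocalComp (A : Matrix V V (ZMod 2)) (v : V) : Matrix V V (ZMod 2) :=
  fun x y => simpleLocalComp A v x y + if x = y ∧ x ≠ v ∧ A v x = 1 then 1 else 0

/-- One local move. -/
def LocalStep (A B : Matrix V V (ZMod 2)) : Prop :=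
  ∃ v, B = loopComp A v ∨ B = simpleLocalComp A v ∨ B = nonSimpleLocalComp A v

/-- Local equivalence: a finite sequence of loop complementations and
(simple or non-simple) local complementations. -/
def LocallyEquiv (A B : Matrix V V (ZMod 2)) : Prop :=
  Relation.ReflTransGen LocalStep A B

/-- `G` has a split: a bipartition `(V₁, V₂)` of `V` with `|V₁|, |V₂| ≥ 2` such that the
GF(2)-rank of `A[V₁, V₂]` is at most 1. -/
def HasSplit (A : Matrix V V (ZMod 2)) : Prop :=
  ∃ X : Set V, 2 ≤ X.ncard ∧ 2 ≤ Xᶜ.ncard ∧ cutRank A X ≤ 1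

/-- A transverse circuit: a circuit of the isotropic matroid meeting each
vertex triple at most once. -/
def IsTransverseCircuit (A : Matrix V V (ZMod 2)) (C : Set (V × Fin 3)) : Prop :=
  iasCircuit A C ∧ ∀ p ∈ C, ∀ q ∈ C, p.1 = q.1 → p = q

/-- An isotropic `k`-separation of `G`: `|X|, |V - X| ≥ k` and `c_G(X) < k`. -/
def IsotropicSep (A : Matrix V V (ZMod 2)) (k : ℕ) (X : Set V) : Prop :=
  k ≤ X.ncard ∧ k ≤ Xᶜ.ncard ∧ cutRank A X < k

/-- The isotropic connectivity `κ_B(G)`, with `min ∅ = ∞`. -/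
noncomputable def kappaB (A : Matrix V V (ZMod 2)) : ℕ∞ :=
  sInf {j : ℕ∞ | ∃ k : ℕ, (k : ℕ∞) = j ∧ ∃ X, IsotropicSep A k X}

/-- The 5-cycle `C₅`. -/
def C5mat : Matrix (Fin 5) (Fin 5) (ZMod 2) :=
  fun i j => if (i.val + 1) % 5 = j.val ∨ (j.val + 1) % 5 = i.val then 1 else 0

/-- The wheel `W₅` : a 5-cycle on `{0,…,4}` plus a hub `5` adjacent to all. -/
def W5mat : Matrix (Fin 6) (Fin 6) (ZMod 2) :=
  fun i j =>
    if (i.val = 5 ∧ j.val ≠ 5) ∨ (j.val = 5 ∧ i.val ≠ 5) then 1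
    else if i.val ≠ 5 ∧ j.val ≠ 5 ∧ ((i.val + 1) % 5 = j.val ∨ (j.val + 1) % 5 = i.val) then 1
    else 0

/-!
Let `S` be a vertical `κ`-separation with `κ = κ(M) < n = r(M)`. Minimality of `κ` forces
`λ(S) = κ - 1` exactly. Since `ψ(v) = φ(v) + χ(v)`, whenever `S` or its complement contains two
elements of a vertex triple it spans the third, and moving that third element across keeps `S` a
vertical `κ`-separation: a drop of rank on the other side would give a vertical
`(κ - 1)`-separation. Repeating this at every vertex yields `S = τ(X)`. Finally
`r(τ(X)) = |X| + c(X)`, because the `φ`-columns of `X` span the vectors supported on `X` and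
projecting onto the coordinates `V - X` leaves the columns of `A[V - X, X]`; with
`c(V - X) = c(X)` this gives `κ - 1 = λ(τ(X)) = 2 c(X)`.
-/

open Submodule Module Set

section LinearAlgebra

variable {K M N : Type*} [Field K] [AddCommGroup M] [Module K M] [AddCommGroup N] [Module K N]

lemma finrank_span_insert_le [FiniteDimensional K M] (x : M) (s : Set M) :
    finrank K (span K (insert x s)) ≤ finrank K (span K s) + 1 := by
  rw [span_insert]
  refine (finrank_add_le_finrank_add_finrank _ _).trans ?_
  have : finrank K (K ∙ x) ≤ 1 := by simpa using finrank_span_le_card (R := K) {x}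
  omega

lemma finrank_map_add_finrank_ker_of_ker_le [FiniteDimensional K M] (f : M →ₗ[K] N)
    {U : Submodule K M} (hU : LinearMap.ker f ≤ U) :
    finrank K (U.map f) + finrank K (LinearMap.ker f) = finrank K U := by
  have hker : LinearMap.ker (f.domRestrict U) = (LinearMap.ker f).comap U.subtype := by
    ext x; simp [LinearMap.mem_ker]
  rw [← (f.domRestrict U).finrank_range_add_finrank_ker, LinearMap.range_domRestrict, hker,
    (comapSubtypeEquivOfLe hU).finrank_eq]

lemma finrank_ker_funLeft_subtype_compl {V : Type*} [Fintype V] (X : Set V) :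
    finrank K (LinearMap.ker (LinearMap.funLeft K K (Subtype.val : ↥Xᶜ → V))) = X.ncard := by
  classical
  have hsurj := LinearMap.funLeft_surjective_of_injective K K (Subtype.val : ↥Xᶜ → V)
    Subtype.val_injective
  have hrn := (LinearMap.funLeft K K (Subtype.val : ↥Xᶜ → V)).finrank_range_add_finrank_ker
  rw [LinearMap.range_eq_top.mpr hsurj, finrank_top, finrank_pi, finrank_pi,
    ← Nat.card_eq_fintype_card, Nat.card_coe_set_eq] at hrn
  have hX := ncard_add_ncard_compl X
  rw [Nat.card_eq_fintype_card] at hX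
  omega

end LinearAlgebra

lemma Fin.exists_odd_one_out {p : Fin 3 → Prop} (h : ∃ i j, p i ∧ ¬ p j) :
    ∃ i, (¬ p i ∧ ∀ j ≠ i, p j) ∨ (p i ∧ ∀ j ≠ i, ¬ p j) := by
  classical
  have key : ∀ f : Fin 3 → Bool, (∃ i j, f i ∧ ¬ f j) →
      ∃ i, (¬ f i ∧ ∀ j ≠ i, f j) ∨ (f i ∧ ∀ j ≠ i, ¬ f j) := by decide
  simpa using key (fun i => decide (p i)) (by simpa using h)

section IsotropicMatroid

variable (A : Matrix V V (ZMod 2))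

omit [Fintype V] in
lemma iasCol_zero_add_iasCol_one (v : V) :
    iasCol A (v, 0) + iasCol A (v, 1) = iasCol A (v, 2) := by
  funext w
  simp [iasCol, add_comm]

omit [Fintype V] in
lemma iasCol_mem_span_of_forall_ne {T : Set (V × Fin 3)} {v : V} {i : Fin 3}
    (hT : ∀ j ≠ i, (v, j) ∈ T) : iasCol A (v, i) ∈ span (ZMod 2) (iasCol A '' T) := by
  have mem : ∀ j ≠ i, iasCol A (v, j) ∈ span (ZMod 2) (iasCol A '' T) :=
    fun j hj => subset_span (mem_image_of_mem _ (hT j hj))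
  have h := iasCol_zero_add_iasCol_one A v
  match i with
  | 0 =>
    rw [eq_sub_of_add_eq h]
    exact sub_mem (mem 2 (by decide)) (mem 1 (by decide))
  | 1 =>
    rw [eq_sub_of_add_eq' h]
    exact sub_mem (mem 2 (by decide)) (mem 0 (by decide))
  | 2 =>
    rw [← h]
    exact add_mem (mem 0 (by decide)) (mem 1 (by decide))

lemma span_iasCol_univ : span (ZMod 2) (iasCol A '' univ) = ⊤ := by
  refine eq_top_iff.mpr fun g _ => ?_
  rw [pi_eq_sum_univ g]
  refine sum_mem fun v _ => smul_mem _ _ (subset_span ⟨(v, 0), trivial, ?_⟩)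
  funext w
  simp [iasCol, eq_comm]

lemma iasRank_univ : iasRank A univ = Fintype.card V := by
  rw [iasRank, span_iasCol_univ, finrank_top, finrank_pi]

lemma iasRank_mono {S T : Set (V × Fin 3)} (h : S ⊆ T) : iasRank A S ≤ iasRank A T :=
  Submodule.finrank_mono (span_mono (image_mono h))

lemma iasRank_insert_le (a : V × Fin 3) (S : Set (V × Fin 3)) :
    iasRank A (insert a S) ≤ iasRank A S + 1 := by
  rw [iasRank, image_insert_eq]
  exact finrank_span_insert_le _ _

omit [Fintype V] in
lemma iasRank_insert_of_mem_span {a : V × Fin 3} {S : Set (V × Fin 3)}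
    (h : iasCol A a ∈ span (ZMod 2) (iasCol A '' S)) :
    iasRank A (insert a S) = iasRank A S := by
  rw [iasRank, image_insert_eq, span_insert_eq_span h, iasRank]

lemma card_le_iasRank_add_iasRank_compl (S : Set (V × Fin 3)) :
    Fintype.card V ≤ iasRank A S + iasRank A Sᶜ := by
  have hsup : span (ZMod 2) (iasCol A '' S) ⊔ span (ZMod 2) (iasCol A '' Sᶜ) = ⊤ := by
    rw [← span_union, ← image_union, union_compl_self, span_iasCol_univ]
  have h := finrank_add_le_finrank_add_finrank (span (ZMod 2) (iasCol A '' S))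
    (span (ZMod 2) (iasCol A '' Sᶜ))
  rwa [hsup, finrank_top, finrank_pi] at h

lemma iasLambda_eq (S : Set (V × Fin 3)) :
    iasLambda A S = iasRank A S + iasRank A Sᶜ - Fintype.card V := by
  rw [iasLambda, iasRank_univ]

end IsotropicMatroid

section VerticalSep

variable {A : Matrix V V (ZMod 2)} {k : ℕ} {S : Set (V × Fin 3)}

omit [Fintype V] in
lemma iasKappa_le (hS : VerticalSep A k S) : iasKappa A ≤ k :=
  Nat.sInf_le (Or.inl ⟨S, hS⟩)

lemma exists_verticalSep_iasKappa (h : iasKappa A < Fintype.card V) :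
    ∃ S, VerticalSep A (iasKappa A) S := by
  have hne : ({k : ℕ | ∃ S, VerticalSep A k S} ∪ {iasRank A univ}).Nonempty :=
    ⟨_, Or.inr rfl⟩
  rcases Nat.sInf_mem hne with hS | hr
  · exact hS
  · rw [iasKappa, hr, iasRank_univ] at h
    exact (lt_irrefl _ h).elim

lemma VerticalSep.compl (hS : VerticalSep A k S) : VerticalSep A k Sᶜ := by
  obtain ⟨hk, hlam, hr, hrc⟩ := hS
  refine ⟨hk, ?_, hrc, by rwa [compl_compl]⟩
  rw [iasLambda_eq] at hlam ⊢
  rw [compl_compl]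
  omega

lemma VerticalSep.iasRank_add_iasRank_compl (hS : VerticalSep A (iasKappa A) S) :
    iasRank A S + iasRank A Sᶜ + 1 = Fintype.card V + iasKappa A := by
  obtain ⟨hk, hlam, hr, hrc⟩ := hS
  rw [iasLambda_eq] at hlam
  have hn := card_le_iasRank_add_iasRank_compl A S
  by_contra hne
  have := iasKappa_le (k := iasRank A S + iasRank A Sᶜ + 1 - Fintype.card V) (S := S)
    ⟨by omega, by rw [iasLambda_eq A]; omega, by omega, by omega⟩
  omega

lemma VerticalSep.insert_of_mem_span (hS : VerticalSep A (iasKappa A) S) {a : V × Fin 3}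
    (ha : iasCol A a ∈ span (ZMod 2) (iasCol A '' S)) :
    VerticalSep A (iasKappa A) (insert a S) := by
  have hsum := hS.iasRank_add_iasRank_compl
  obtain ⟨hk, -, hr, hrc⟩ := hS
  have hcompl : (insert a S)ᶜ = Sᶜ \ {a} := by
    rw [← union_singleton, compl_union, sdiff_eq]
  have hr' := iasRank_insert_of_mem_span A ha
  have hn := card_le_iasRank_add_iasRank_compl A (insert a S)
  have hle : iasRank A Sᶜ ≤ iasRank A (Sᶜ \ {a}) + 1 :=
    (iasRank_mono A (subset_insert_sdiff_singleton a Sᶜ)).trans (iasRank_insert_le A _ _)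
  have hge : iasRank A (Sᶜ \ {a}) ≤ iasRank A Sᶜ := iasRank_mono A sdiff_subset
  rw [hcompl, hr'] at hn
  have hsep : ∀ k, 0 < k → iasRank A S + iasRank A (Sᶜ \ {a}) < Fintype.card V + k →
      k ≤ iasRank A S → k ≤ iasRank A (Sᶜ \ {a}) → VerticalSep A k (insert a S) :=
    fun k hk hlam hr hrc => ⟨hk, by rw [iasLambda_eq, hcompl, hr']; omega, hr'.symm ▸ hr,
      hcompl.symm ▸ hrc⟩
  -- if removing `a` dropped the rank of the complement, `insert a S` would be a
  -- vertical `(κ - 1)`-separation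
  have hrc' : iasRank A (Sᶜ \ {a}) = iasRank A Sᶜ := by
    by_contra hne
    have := iasKappa_le (hsep (iasKappa A - 1) (by omega) (by omega) (by omega) (by omega))
    omega
  exact hsep _ hk (by omega) hr (by omega)

lemma VerticalSep.diff_singleton_of_mem_span (hS : VerticalSep A (iasKappa A) S)
    {a : V × Fin 3} (ha : iasCol A a ∈ span (ZMod 2) (iasCol A '' Sᶜ)) :
    VerticalSep A (iasKappa A) (S \ {a}) := by
  have h := (hS.compl.insert_of_mem_span ha).compl
  rwa [← union_singleton, compl_union, compl_compl, ← sdiff_eq] at h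

end VerticalSep

def Splits (S : Set (V × Fin 3)) (v : V) : Prop := ∃ i j, (v, i) ∈ S ∧ (v, j) ∉ S

omit [Fintype V] [DecidableEq V] in
lemma tauSet_compl (X : Set V) : (tauSet X)ᶜ = tauSet Xᶜ := rfl

omit [Fintype V] [DecidableEq V] in
lemma eq_tauSet_of_forall_not_splits {S : Set (V × Fin 3)} (hS : ∀ v, ¬ Splits S v) :
    S = tauSet {v | (v, 0) ∈ S} := by
  ext ⟨v, i⟩
  have := hS v
  simp only [Splits, not_exists, not_and, not_not] at this
  exact ⟨fun h => this i 0 h, fun h => this 0 i h⟩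

section Unsplitting

variable {A : Matrix V V (ZMod 2)} {S : Set (V × Fin 3)}

lemma VerticalSep.exists_not_splits (hS : VerticalSep A (iasKappa A) S) (v : V) :
    ∃ T, VerticalSep A (iasKappa A) T ∧ (∀ p : V × Fin 3, p.1 ≠ v → (p ∈ T ↔ p ∈ S)) ∧
      ¬ Splits T v := by
  by_cases hv : Splits S v
  swap
  · exact ⟨S, hS, fun _ _ => Iff.rfl, hv⟩
  obtain ⟨i, ⟨hi, hout⟩ | ⟨hi, hin⟩⟩ := Fin.exists_odd_one_out hv
  · refine ⟨insert (v, i) S, hS.insert_of_mem_span (iasCol_mem_span_of_forall_ne A hout),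
      fun p hp => ?_, ?_⟩
    · simp [mem_insert_iff, show p ≠ (v, i) from fun h => hp (h ▸ rfl)]
    · rintro ⟨-, j, -, hj⟩
      rcases eq_or_ne j i with rfl | hji
      · exact hj (mem_insert _ _)
      · exact hj (mem_insert_of_mem _ (hout j hji))
  · refine ⟨S \ {(v, i)}, hS.diff_singleton_of_mem_span (iasCol_mem_span_of_forall_ne A hin),
      fun p hp => ?_, ?_⟩
    · simp [show p ≠ (v, i) from fun h => hp (h ▸ rfl)]
    · rintro ⟨j, -, hj, -⟩
      rcases eq_or_ne j i with rfl | hji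
      · exact hj.2 rfl
      · exact hin j hji hj.1

lemma VerticalSep.exists_tauSet (hS : VerticalSep A (iasKappa A) S) :
    ∃ X : Set V, VerticalSep A (iasKappa A) (tauSet X) := by
  suffices h : ∀ F : Finset V, ∃ T, VerticalSep A (iasKappa A) T ∧ ∀ v ∈ F, ¬ Splits T v by
    obtain ⟨T, hT, hsplit⟩ := h Finset.univ
    rw [eq_tauSet_of_forall_not_splits fun v => hsplit v (Finset.mem_univ v)] at hT
    exact ⟨_, hT⟩
  intro F
  induction F using Finset.induction_on with
  | empty => exact ⟨S, hS, by simp⟩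
  | insert v F _ ih =>
    obtain ⟨T, hT, hF⟩ := ih
    obtain ⟨T', hT', hagree, hv⟩ := hT.exists_not_splits v
    refine ⟨T', hT', fun w hw => ?_⟩
    rcases eq_or_ne w v with rfl | hwv
    · exact hv
    · have hsame : ∀ i, (w, i) ∈ T' ↔ (w, i) ∈ T := fun i => hagree (w, i) hwv
      simpa only [Splits, hsame] using hF w ((Finset.mem_insert.mp hw).resolve_left hwv)

end Unsplitting

section CutRank

variable (A : Matrix V V (ZMod 2)) (X : Set V)

omit [Fintype V] in
lemma funLeft_iasCol {v : V} (hv : v ∈ X) (i : Fin 3) :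
    LinearMap.funLeft (ZMod 2) (ZMod 2) (Subtype.val : ↥Xᶜ → V) (iasCol A (v, i)) =
      if i = 0 then 0 else fun w : ↥Xᶜ => A w v := by
  funext w
  have hw : (w : V) ≠ v := fun h => w.2 (h ▸ hv)
  by_cases h0 : i = 0 <;> by_cases h1 : i = 1 <;> simp [iasCol, LinearMap.funLeft_apply, *]

lemma ker_funLeft_le_span_iasCol_tauSet :
    LinearMap.ker (LinearMap.funLeft (ZMod 2) (ZMod 2) (Subtype.val : ↥Xᶜ → V)) ≤
      span (ZMod 2) (iasCol A '' tauSet X) := by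
  intro g hg
  rw [pi_eq_sum_univ g]
  refine sum_mem fun v _ => ?_
  by_cases hv : v ∈ X
  · refine smul_mem _ _ (subset_span ⟨(v, 0), hv, ?_⟩)
    funext w
    simp [iasCol, eq_comm]
  · have : g v = 0 := congrFun (LinearMap.mem_ker.mp hg) ⟨v, hv⟩
    simp [this]

omit [Fintype V] in
lemma map_funLeft_span_iasCol_tauSet :
    (span (ZMod 2) (iasCol A '' tauSet X)).map
      (LinearMap.funLeft (ZMod 2) (ZMod 2) (Subtype.val : ↥Xᶜ → V)) =
      span (ZMod 2) ((fun x : V => fun w : ↥Xᶜ => A w.1 x) '' X) := by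
  rw [map_span, ← image_comp]
  apply le_antisymm
  · refine span_le.mpr ?_
    rintro _ ⟨⟨v, i⟩, hv, rfl⟩
    rw [Function.comp_apply, funLeft_iasCol A X hv i]
    split_ifs
    · exact zero_mem _
    · exact subset_span ⟨v, hv, rfl⟩
  · refine span_le.mpr ?_
    rintro _ ⟨v, hv, rfl⟩
    exact subset_span ⟨(v, 1), hv, by rw [Function.comp_apply, funLeft_iasCol A X hv]; rfl⟩

lemma iasRank_tauSet : iasRank A (tauSet X) = X.ncard + cutRank A X := by
  rw [iasRank, ← finrank_map_add_finrank_ker_of_ker_le _ (ker_funLeft_le_span_iasCol_tauSet A X),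
    map_funLeft_span_iasCol_tauSet, finrank_ker_funLeft_subtype_compl, cutRank, add_comm]

omit [Fintype V] [DecidableEq V] in
lemma cutRank_eq_rank_submatrix [Fintype X] {Y : Set V} (hY : Y = Xᶜ) :
    cutRank A X = (A.submatrix (Subtype.val : Y → V) (Subtype.val : X → V)).rank := by
  subst hY
  rw [Matrix.rank_eq_finrank_span_cols, cutRank, image_eq_range]
  rfl

omit [DecidableEq V] in
lemma cutRank_compl (hA : A.IsSymm) : cutRank A Xᶜ = cutRank A X := by
  classical
  rw [cutRank_eq_rank_submatrix A Xᶜ (compl_compl X).symm, cutRank_eq_rank_submatrix A X rfl,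
    ← Matrix.rank_transpose, Matrix.transpose_submatrix, hA.eq]

end CutRank

theorem stmt5 (A : Matrix V V (ZMod 2)) (hA : A.IsSymm)
    (h : iasKappa A < Fintype.card V) :
    ∃ X : Set V, VerticalSep A (iasKappa A) (tauSet X) ∧
      iasKappa A = 2 * cutRank A X + 1 := by
  obtain ⟨S, hS⟩ := exists_verticalSep_iasKappa h
  obtain ⟨X, hX⟩ := hS.exists_tauSet
  refine ⟨X, hX, ?_⟩
  have hsum := hX.iasRank_add_iasRank_compl
  rw [tauSet_compl, iasRank_tauSet, iasRank_tauSet, cutRank_compl A X hA] at hsum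
  have hcard := ncard_add_ncard_compl X
  rw [Nat.card_eq_fintype_card] at hcard
  omega
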